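/- Let N0 ∈ K, V0 ∈ L^∞(0,1), set N(t) := proj_K(N0 + t·V0) for t ≥ 0, and define P(t,x) := ∫₀ˣ N(t,z)dz for t ≥ 0 and x ∈ [0,1]. Then for each x ∈ [0,1] the function t ↦ P(t,x) is concave on [0,∞), and for each t ≥ 0 the function x ↦ P(t,x) is convex on [0,1]. -/

import Mathlib

open MeasureTheory

/-- Lebesgue measure restricted to the interval `(0,1)`; `L²(0,1)` is `Lp ℝ 2 μ01`. -/
noncomputable def μ01 : Measure ℝ := volume.restrict (Set.Ioo 0 1)

/-- `K` is the set of elements of `L²(0,1)` admitting a nondecreasing representative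
on `(0,1)`; it is a nonempty closed convex cone. -/
def K01 : Set (Lp ℝ 2 μ01) :=
  {f | ∃ g : ℝ → ℝ, MonotoneOn g (Set.Ioo 0 1) ∧ (f : ℝ → ℝ) =ᵐ[μ01] g}

open Set Filter

instance : IsFiniteMeasure μ01 := by unfold μ01; infer_instance

section Helpers

lemma K01_convex : Convex ℝ K01 := by
  intro f hf g hg a b ha hb hab
  obtain ⟨gf, hgf, haef⟩ := hf
  obtain ⟨gg, hgg, haeg⟩ := hg
  refine ⟨fun z => a * gf z + b * gg z, ?_, ?_⟩
  · intro x hx y hy hxy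
    dsimp only
    have h1 := mul_le_mul_of_nonneg_left (hgf hx hy hxy) ha
    have h2 := mul_le_mul_of_nonneg_left (hgg hx hy hxy) hb
    linarith
  · filter_upwards [Lp.coeFn_add (a • f) (b • g), Lp.coeFn_smul a f, Lp.coeFn_smul b g,
      haef, haeg] with z h1 h2 h3 h4 h5
    simp only [h1, Pi.add_apply, h2, h3, Pi.smul_apply, smul_eq_mul, h4, h5]

lemma proj_vi (proj : Lp ℝ 2 μ01 → Lp ℝ 2 μ01)
    (hprojmem : ∀ u, proj u ∈ K01)
    (hprojnear : ∀ u, ∀ k ∈ K01, ‖u - proj u‖ ≤ ‖u - k‖)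
    (u k : Lp ℝ 2 μ01) (hk : k ∈ K01) :
    (inner ℝ (u - proj u) (k - proj u) : ℝ) ≤ 0 := by
  set v := proj u with hv
  set p : ℝ := inner ℝ (u - v) (k - v) with hp
  have key : ∀ θ : ℝ, 0 < θ → θ ≤ 1 → p ≤ θ / 2 * ‖k - v‖ ^ 2 := by
    intro θ hθ0 hθ1
    have hwK : θ • k + (1 - θ) • v ∈ K01 :=
      K01_convex hk (hprojmem u) hθ0.le (by linarith) (by ring)
    have hle := hprojnear u _ hwK
    have hrw : u - (θ • k + (1 - θ) • v) = (u - v) - θ • (k - v) := by module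
    have hsq : ‖u - v‖ ^ 2 ≤ ‖(u - v) - θ • (k - v)‖ ^ 2 := by
      rw [← hrw]
      exact pow_le_pow_left₀ (norm_nonneg _) hle 2
    have hexp : ‖(u - v) - θ • (k - v)‖ ^ 2
        = ‖u - v‖ ^ 2 - 2 * (θ * p) + θ ^ 2 * ‖k - v‖ ^ 2 := by
      rw [norm_sub_sq_real, real_inner_smul_right, norm_smul]
      simp only [Real.norm_eq_abs, abs_of_pos hθ0, mul_pow]
      try ring
    rw [hexp] at hsq
    nlinarith
  have h2 : Tendsto (fun θ : ℝ => θ / 2 * ‖k - v‖ ^ 2) (nhdsWithin 0 (Set.Ioi 0)) (nhds 0) := by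
    have hc : Continuous (fun θ : ℝ => θ / 2 * ‖k - v‖ ^ 2) :=
      (continuous_id.div_const 2).mul continuous_const
    have := hc.tendsto 0
    simp only [zero_div, zero_mul] at this
    exact this.mono_left nhdsWithin_le_nhds
  refine ge_of_tendsto h2 ?_
  filter_upwards [Ioc_mem_nhdsGT_of_mem (by norm_num : (0:ℝ) ∈ Set.Ico 0 1)] with θ hθ
  exact key θ hθ.1 hθ.2

lemma Lp_integrableOn (f : Lp ℝ 2 μ01) : IntegrableOn (f : ℝ → ℝ) (Set.Ioo 0 1) volume :=
  (Lp.memLp f).integrable (by norm_num)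

lemma intervalIntegrable_of_Lp (f : ℝ → ℝ) (hf : IntegrableOn f (Set.Ioo 0 1) volume)
    {a b : ℝ} (ha : 0 ≤ a) (hab : a ≤ b) (hb : b ≤ 1) :
    IntervalIntegrable f volume a b :=
  (intervalIntegrable_iff_integrableOn_Ioo_of_le hab).mpr
    (hf.mono_set (Set.Ioo_subset_Ioo ha hb))

lemma integral_congr_ae01 {f g : ℝ → ℝ} (h : f =ᵐ[μ01] g) {a b : ℝ}
    (ha : 0 ≤ a) (hab : a ≤ b) (hb : b ≤ 1) :
    ∫ z in a..b, f z = ∫ z in a..b, g z := by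
  rw [intervalIntegral.integral_of_le hab, intervalIntegral.integral_of_le hab,
    integral_Ioc_eq_integral_Ioo, integral_Ioc_eq_integral_Ioo]
  have h' : f =ᵐ[volume.restrict (Set.Ioo 0 1)] g := h
  exact integral_congr_ae (ae_restrict_of_ae_restrict_of_subset (Set.Ioo_subset_Ioo ha hb) h')

lemma convexOn_primitive {g : ℝ → ℝ} (hg : MonotoneOn g (Set.Ioo 0 1))
    (hgi : IntegrableOn g (Set.Ioo 0 1) volume) :
    ConvexOn ℝ (Set.Icc 0 1) (fun x => ∫ z in (0:ℝ)..x, g z) := by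
  apply convexOn_of_slope_mono_adjacent (convex_Icc 0 1)
  intro x y z hx hz hxy hyz
  have hy : y ∈ Set.Ioo (0:ℝ) 1 := ⟨lt_of_le_of_lt hx.1 hxy, lt_of_lt_of_le hyz hz.2⟩
  have hIxy : IntervalIntegrable g volume x y :=
    intervalIntegrable_of_Lp g hgi hx.1 hxy.le hy.2.le
  have hIyz : IntervalIntegrable g volume y z :=
    intervalIntegrable_of_Lp g hgi hy.1.le hyz.le hz.2
  have hI0x : IntervalIntegrable g volume 0 x :=
    intervalIntegrable_of_Lp g hgi le_rfl hx.1 (hx.2.trans (by norm_num))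
  have hI0y : IntervalIntegrable g volume 0 y :=
    intervalIntegrable_of_Lp g hgi le_rfl (hx.1.trans hxy.le) hy.2.le
  have e1 : (∫ t in (0:ℝ)..y, g t) - ∫ t in (0:ℝ)..x, g t = ∫ t in x..y, g t := by
    rw [← intervalIntegral.integral_add_adjacent_intervals hI0x hIxy]; ring
  have e2 : (∫ t in (0:ℝ)..z, g t) - ∫ t in (0:ℝ)..y, g t = ∫ t in y..z, g t := by
    rw [← intervalIntegral.integral_add_adjacent_intervals hI0y hIyz]; ring
  have hub : ∫ t in x..y, g t ≤ g y * (y - x) := by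
    rw [intervalIntegral.integral_of_le hxy.le, integral_Ioc_eq_integral_Ioo]
    have hmono : ∀ t ∈ Set.Ioo x y, g t ≤ g y := fun t ht =>
      hg ⟨lt_of_le_of_lt hx.1 ht.1, ht.2.trans hy.2⟩ hy ht.2.le
    calc ∫ t in Set.Ioo x y, g t ≤ ∫ _t in Set.Ioo x y, g y :=
          setIntegral_mono_on ((intervalIntegrable_iff_integrableOn_Ioo_of_le hxy.le).mp hIxy)
            ((integrableOn_const_iff).mpr (Or.inr (by simp [Real.volume_Ioo]))) measurableSet_Ioo hmono
      _ = g y * (y - x) := by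
          rw [setIntegral_const, smul_eq_mul, measureReal_def, Real.volume_Ioo,
            ENNReal.toReal_ofReal (by linarith : (0:ℝ) ≤ y - x)]; ring
  have hlb : g y * (z - y) ≤ ∫ t in y..z, g t := by
    rw [intervalIntegral.integral_of_le hyz.le, integral_Ioc_eq_integral_Ioo]
    have hmono : ∀ t ∈ Set.Ioo y z, g y ≤ g t := fun t ht =>
      hg hy ⟨hy.1.trans ht.1, ht.2.trans_le hz.2⟩ ht.1.le
    calc g y * (z - y) = ∫ _t in Set.Ioo y z, g y := by
          rw [setIntegral_const, smul_eq_mul, measureReal_def, Real.volume_Ioo,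
            ENNReal.toReal_ofReal (by linarith : (0:ℝ) ≤ z - y)]; ring
      _ ≤ ∫ t in Set.Ioo y z, g t :=
          setIntegral_mono_on ((integrableOn_const_iff).mpr (Or.inr (by simp [Real.volume_Ioo])))
            ((intervalIntegrable_iff_integrableOn_Ioo_of_le hyz.le).mp hIyz)
            measurableSet_Ioo hmono
  rw [e1, e2, div_le_div_iff₀ (by linarith) (by linarith)]
  nlinarith

lemma inner_test (u n : Lp ℝ 2 μ01)
    (hvi : ∀ k ∈ K01, (inner ℝ (u - n) (k - n) : ℝ) ≤ 0)
    (g ψ : ℝ → ℝ) (hng : (n : ℝ → ℝ) =ᵐ[μ01] g)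
    (hψm : AEStronglyMeasurable ψ μ01) (C : ℝ) (hψb : ∀ z, ‖ψ z‖ ≤ C)
    (hmono : MonotoneOn (fun z => g z + ψ z) (Set.Ioo 0 1)) :
    ∫ z, ((u : ℝ → ℝ) z - (n : ℝ → ℝ) z) * ψ z ∂μ01 ≤ 0 := by
  have hψ2 : MemLp ψ 2 μ01 := MemLp.of_bound hψm C (Filter.Eventually.of_forall hψb)
  set E := hψ2.toLp ψ with hE
  have hEc : (E : ℝ → ℝ) =ᵐ[μ01] ψ := hψ2.coeFn_toLp
  have hkK : n + E ∈ K01 := by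
    refine ⟨fun z => g z + ψ z, hmono, ?_⟩
    filter_upwards [Lp.coeFn_add n E, hng, hEc] with z h1 h2 h3
    rw [h1, Pi.add_apply, h2, h3]
  have hle := hvi (n + E) hkK
  rw [add_sub_cancel_left] at hle
  have heq : ∫ z, ((u : ℝ → ℝ) z - (n : ℝ → ℝ) z) * ψ z ∂μ01 = (inner ℝ (u - n) E : ℝ) := by
    rw [L2.inner_def]
    apply integral_congr_ae
    filter_upwards [Lp.coeFn_sub u n, hEc] with z h1 h2
    rw [h1, h2, Real.inner_apply]; rfl
  linarith [heq ▸ hle]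

lemma integral_mul_indicator01 (D : ℝ → ℝ) {r : ℝ} (hr0 : 0 ≤ r) (hr1 : r ≤ 1) :
    ∫ z, D z * (Set.Ioi r).indicator (fun _ => (1:ℝ)) z ∂μ01 = ∫ z in r..1, D z := by
  have h1 : (fun z => D z * (Set.Ioi r).indicator (fun _ => (1:ℝ)) z)
      = (Set.Ioi r).indicator D := by
    funext z; simp only [Set.indicator]; split_ifs <;> ring
  rw [h1, integral_indicator measurableSet_Ioi]
  show ∫ z in Set.Ioi r, D z ∂(volume.restrict (Set.Ioo 0 1)) = _
  rw [Measure.restrict_restrict measurableSet_Ioi]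
  have h2 : Set.Ioi r ∩ Set.Ioo 0 1 = Set.Ioo r 1 := by
    ext z; simp only [Set.mem_inter_iff, Set.mem_Ioi, Set.mem_Ioo]
    constructor
    · rintro ⟨h, _, h'⟩; exact ⟨h, h'⟩
    · rintro ⟨h, h'⟩; exact ⟨h, lt_of_le_of_lt hr0 h, h'⟩
  rw [h2, intervalIntegral.integral_of_le hr1, integral_Ioc_eq_integral_Ioo]

lemma integral_eq_01 (D : ℝ → ℝ) : ∫ z, D z ∂μ01 = ∫ z in (0:ℝ)..1, D z := by
  rw [intervalIntegral.integral_of_le zero_le_one, integral_Ioc_eq_integral_Ioo]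
  rfl

lemma H_tail_nonpos (u n : Lp ℝ 2 μ01) (hnK : n ∈ K01)
    (hvi : ∀ k ∈ K01, (inner ℝ (u - n) (k - n) : ℝ) ≤ 0) :
    ∀ r ∈ Set.Icc (0:ℝ) 1, ∫ z in r..1, ((u : ℝ → ℝ) z - (n : ℝ → ℝ) z) ≤ 0 := by
  obtain ⟨g, hg, hng⟩ := hnK
  intro r hr
  have hind : Monotone ((Set.Ioi r).indicator (fun _ => (1:ℝ))) := by
    intro x y hxy
    simp only [Set.indicator, Set.mem_Ioi]
    split_ifs <;> linarith
  have h1 := inner_test u n hvi g ((Set.Ioi r).indicator (fun _ => (1:ℝ))) hng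
    ((measurable_const.indicator measurableSet_Ioi).aestronglyMeasurable) 1
    (fun z => by simp only [Set.indicator]; split_ifs <;> simp)
    (fun x hx y hy hxy => add_le_add (hg hx hy hxy) (hind hxy))
  rwa [integral_mul_indicator01 _ hr.1 hr.2] at h1

lemma H_total_zero (u n : Lp ℝ 2 μ01) (hnK : n ∈ K01)
    (hvi : ∀ k ∈ K01, (inner ℝ (u - n) (k - n) : ℝ) ≤ 0) :
    ∫ z in (0:ℝ)..1, ((u : ℝ → ℝ) z - (n : ℝ → ℝ) z) = 0 := by
  obtain ⟨g, hg, hng⟩ := hnK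
  have hpos := inner_test u n hvi g (fun _ => (1:ℝ)) hng aestronglyMeasurable_const 1
    (fun z => by norm_num)
    (fun x hx y hy hxy => by simpa using hg hx hy hxy)
  have hneg := inner_test u n hvi g (fun _ => (-1:ℝ)) hng aestronglyMeasurable_const 1
    (fun z => by norm_num)
    (fun x hx y hy hxy => by simpa using hg hx hy hxy)
  simp only [mul_one, mul_neg_one] at hpos hneg
  rw [integral_eq_01] at hpos
  rw [integral_neg, integral_eq_01] at hneg
  linarith
lemma level_lemma (u n : Lp ℝ 2 μ01)
    (hvi : ∀ k ∈ K01, (inner ℝ (u - n) (k - n) : ℝ) ≤ 0)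
    (g : ℝ → ℝ) (hg : MonotoneOn g (Set.Ioo 0 1)) (hng : (n : ℝ → ℝ) =ᵐ[μ01] g)
    {p q : ℝ} (hp : p ∈ Set.Ioo (0:ℝ) 1) (hq : q ∈ Set.Ioo (0:ℝ) 1) (hpq : p ≤ q)
    (hgpq : g p < g q) :
    ∃ r ∈ Set.Icc p q, ∫ z in r..1, ((u : ℝ → ℝ) z - (n : ℝ → ℝ) z) = 0 := by
  set D : ℝ → ℝ := fun z => (u : ℝ → ℝ) z - (n : ℝ → ℝ) z with hD
  set c : ℝ := (g p + g q) / 2 with hc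
  have hc1 : g p < c := by simp only [hc]; linarith
  have hc2 : c < g q := by simp only [hc]; linarith
  set ε : ℕ → ℝ := fun k => 1 / (k + 1) with hε
  have hεpos : ∀ k, 0 < ε k := fun k => by positivity
  set φ : ℕ → ℝ → ℝ := fun k s => min (max (s - c) 0) (ε k) with hφ
  have hφmono : ∀ k, Monotone (φ k) := fun k s t hst =>
    min_le_min (max_le_max (by linarith) le_rfl) le_rfl
  have hφ0 : ∀ k s, 0 ≤ φ k s := fun k s => le_min (le_max_right _ _) (hεpos k).le
  have hφε : ∀ k s, φ k s ≤ ε k := fun k s => min_le_right _ _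
  have hφlip : ∀ k, ∀ s t : ℝ, s ≤ t → φ k t - φ k s ≤ t - s := by
    intro k s t hst
    simp only [hφ, min_def, max_def]
    split_ifs <;> linarith
  -- step 1 : each integral vanishes
  have hstep1 : ∀ k, ∫ z, D z * φ k (g z) ∂μ01 = 0 := by
    intro k
    have hψm : AEStronglyMeasurable (fun z => φ k (g z)) μ01 := by
      have hcont : Continuous (φ k) := by
        exact ((continuous_id.sub continuous_const).max continuous_const).min continuous_const
      have h1 : AEStronglyMeasurable (fun z => φ k ((n : ℝ → ℝ) z)) μ01 :=
        hcont.comp_aestronglyMeasurable (Lp.aestronglyMeasurable n)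
      exact h1.congr (by filter_upwards [hng] with z hz; rw [hz])
    have hψb : ∀ z, ‖φ k (g z)‖ ≤ ε k := fun z =>
      abs_le.mpr ⟨by linarith [hφ0 k (g z), hεpos k], hφε k (g z)⟩
    have h1 : ∫ z, D z * φ k (g z) ∂μ01 ≤ 0 := by
      refine inner_test u n hvi g (fun z => φ k (g z)) hng hψm (ε k) hψb ?_
      intro x hx y hy hxy
      exact add_le_add (hg hx hy hxy) (hφmono k (hg hx hy hxy))
    have h2 : ∫ z, D z * -φ k (g z) ∂μ01 ≤ 0 := by
      refine inner_test u n hvi g (fun z => -φ k (g z)) hng hψm.neg (ε k)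
        (fun z => by rw [norm_neg]; exact hψb z) ?_
      intro x hx y hy hxy
      have := hφlip k (g x) (g y) (hg hx hy hxy)
      dsimp only
      linarith
    have h3 : ∫ z, D z * -φ k (g z) ∂μ01 = -∫ z, D z * φ k (g z) ∂μ01 := by
      rw [← integral_neg]; congr 1; funext z; ring
    rw [h3] at h2
    linarith
  -- the crossing point r
  set S : Set ℝ := {z | z ∈ Set.Icc p q ∧ g z ≤ c} with hS
  have hpS : p ∈ S := ⟨⟨le_rfl, hpq⟩, hc1.le⟩
  have hSne : S.Nonempty := ⟨p, hpS⟩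
  have hSb : BddAbove S := bddAbove_Icc.mono (fun z hz => hz.1)
  set r : ℝ := sSup S with hr
  have hpr : p ≤ r := le_csSup hSb hpS
  have hrq : r ≤ q := csSup_le hSne (fun z hz => hz.1.2)
  have hr01 : r ∈ Set.Ioo (0:ℝ) 1 := ⟨hp.1.trans_le hpr, lt_of_le_of_lt hrq hq.2⟩
  have hiff : ∀ z ∈ Set.Ioo (0:ℝ) 1, z ≠ r → (c < g z ↔ r < z) := by
    intro z hz hzr
    constructor
    · intro hcz
      by_contra hle
      push_neg at hle
      have hzltr : z < r := lt_of_le_of_ne hle hzr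
      rcases lt_or_ge z p with hzp | hpz
      · have := hg hz hp hzp.le
        linarith
      · obtain ⟨z', hz'S, hzz'⟩ := exists_lt_of_lt_csSup hSne hzltr
        have hz'mem : z' ∈ Set.Ioo (0:ℝ) 1 :=
          ⟨hp.1.trans_le hz'S.1.1, lt_of_le_of_lt hz'S.1.2 hq.2⟩
        have := hg hz hz'mem hzz'.le
        linarith [hz'S.2]
    · intro hrz
      rcases le_or_gt z q with hzq | hqz
      · by_contra hle
        push_neg at hle
        have hzS : z ∈ S := ⟨⟨hpr.trans hrz.le, hzq⟩, hle⟩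
        exact absurd (le_csSup hSb hzS) (not_le.mpr hrz)
      · have := hg hq hz hqz.le
        linarith
  -- a.e. facts
  have hae1 : ∀ᵐ z ∂μ01, z ∈ Set.Ioo (0:ℝ) 1 := ae_restrict_mem measurableSet_Ioo
  have hae2 : ∀ᵐ z ∂μ01, z ≠ r := by
    have h0 : μ01 {r} = 0 := by
      rw [show μ01 = volume.restrict (Set.Ioo 0 1) from rfl,
        Measure.restrict_apply (measurableSet_singleton r)]
      exact measure_mono_null Set.inter_subset_left Real.volume_singleton
    rw [ae_iff]
    convert h0 using 2
    ext z; simp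
  -- dominated convergence
  set F : ℕ → ℝ → ℝ := fun k z => D z * ((k + 1 : ℝ) * φ k (g z)) with hF
  have hFint : ∀ k, ∫ z, F k z ∂μ01 = 0 := by
    intro k
    have : F k = fun z => (k + 1 : ℝ) * (D z * φ k (g z)) := by funext z; ring
    rw [this, integral_const_mul, hstep1 k, mul_zero]
  have hDint : Integrable D μ01 :=
    ((Lp.memLp u).integrable (by norm_num)).sub ((Lp.memLp n).integrable (by norm_num))
  have hFmeas : ∀ k, AEStronglyMeasurable (F k) μ01 := by
    intro k
    have hcont : Continuous (φ k) :=
      ((continuous_id.sub continuous_const).max continuous_const).min continuous_const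
    have h1 : AEStronglyMeasurable (fun z => φ k ((n : ℝ → ℝ) z)) μ01 :=
      hcont.comp_aestronglyMeasurable (Lp.aestronglyMeasurable n)
    have h2 : AEStronglyMeasurable (fun z => φ k (g z)) μ01 :=
      h1.congr (by filter_upwards [hng] with z hz; rw [hz])
    exact hDint.aestronglyMeasurable.mul (aestronglyMeasurable_const.mul h2)
  have hbound : ∀ k, ∀ᵐ z ∂μ01, ‖F k z‖ ≤ |D z| := by
    intro k
    refine Filter.Eventually.of_forall (fun z => ?_)
    have h1 : (0:ℝ) ≤ (k + 1 : ℝ) * φ k (g z) := by positivity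
    have h2 : (k + 1 : ℝ) * φ k (g z) ≤ 1 := by
      have := hφε k (g z)
      have hk : (0:ℝ) < k + 1 := by positivity
      have : (k + 1 : ℝ) * φ k (g z) ≤ (k + 1 : ℝ) * ε k :=
        mul_le_mul_of_nonneg_left this hk.le
      have hεval : (k + 1 : ℝ) * ε k = 1 := by
        simp only [hε]; field_simp
      linarith
    have heq : ‖F k z‖ = |D z| * ((k + 1 : ℝ) * φ k (g z)) := by
      rw [hF, Real.norm_eq_abs, abs_mul, abs_of_nonneg h1]
    rw [heq]
    exact mul_le_of_le_one_right (abs_nonneg _) h2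
  have hconv : ∀ᵐ z ∂μ01, Tendsto (fun k => F k z) atTop
      (nhds (D z * (Set.Ioi r).indicator (fun _ => (1:ℝ)) z)) := by
    filter_upwards [hae1, hae2] with z hz hzr
    by_cases hcz : c < g z
    · have hrz : r < z := (hiff z hz hzr).mp hcz
      rw [Set.indicator_of_mem (Set.mem_Ioi.mpr hrz)]
      have hev : ∀ᶠ k in atTop, ε k < g z - c := by
        have htend : Tendsto ε atTop (nhds 0) := by
          exact tendsto_one_div_add_atTop_nhds_zero_nat
        exact htend.eventually_lt_const (by linarith)
      refine Tendsto.congr' ?_ tendsto_const_nhds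
      filter_upwards [hev] with k hk
      have hφval : φ k (g z) = ε k := by
        rw [hφ]
        simp only
        rw [max_eq_left (by linarith), min_eq_right (by linarith)]
      have hεval : (k + 1 : ℝ) * ε k = 1 := by simp only [hε]; field_simp
      simp only [hF, hφval, hεval, mul_one]
    · have hrz : ¬ r < z := fun h => hcz ((hiff z hz hzr).mpr h)
      rw [Set.indicator_of_notMem (fun h => hrz (Set.mem_Ioi.mp h)), mul_zero]
      have hφval : ∀ k, φ k (g z) = 0 := by
        intro k
        rw [hφ]
        simp only
        rw [max_eq_right (by linarith [not_lt.mp hcz]), min_eq_left (hεpos k).le]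
      have : (fun k => F k z) = fun _ => 0 := by
        funext k; simp [hF, hφval k]
      rw [this]
      exact tendsto_const_nhds
  have hDabs : Integrable (fun z => |D z|) μ01 := hDint.abs
  have hlim := tendsto_integral_of_dominated_convergence (fun z => |D z|)
    hFmeas hDabs hbound hconv
  have hzero : ∫ z, D z * (Set.Ioi r).indicator (fun _ => (1:ℝ)) z ∂μ01 = 0 := by
    have h1 : Tendsto (fun k => ∫ z, F k z ∂μ01) atTop (nhds 0) := by
      simp only [hFint]; exact tendsto_const_nhds
    exact tendsto_nhds_unique hlim h1
  refine ⟨r, ⟨hpr, hrq⟩, ?_⟩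
  rw [← integral_mul_indicator01 D hr01.1.le hr01.2.le]
  exact hzero
lemma contOn_primitive (f : ℝ → ℝ) (hf : IntegrableOn f (Set.Ioo 0 1) volume) :
    ContinuousOn (fun x => ∫ z in (0:ℝ)..x, f z) (Set.Icc 0 1) := by
  have h : IntegrableOn f (Set.Icc 0 1) volume :=
    hf.congr_set_ae (Filter.EventuallyEq.symm Ioo_ae_eq_Icc)
  have h2 := intervalIntegral.continuousOn_primitive_interval
    (μ := volume) (a := 0) (b := 1) (f := f) (by rwa [Set.uIcc_of_le zero_le_one])
  rwa [Set.uIcc_of_le zero_le_one] at h2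

lemma below_primitive (u n : Lp ℝ 2 μ01) (hnK : n ∈ K01)
    (hvi : ∀ k ∈ K01, (inner ℝ (u - n) (k - n) : ℝ) ≤ 0)
    (W : ℝ → ℝ) (hWconv : ConvexOn ℝ (Set.Icc 0 1) W)
    (hWcont : ContinuousOn W (Set.Icc 0 1))
    (hW0 : W 0 ≤ 0)
    (hWF : ∀ x ∈ Set.Icc (0:ℝ) 1, W x ≤ ∫ z in (0:ℝ)..x, (u : ℝ → ℝ) z)
    (hW1 : W 1 ≤ ∫ z in (0:ℝ)..1, (n : ℝ → ℝ) z) :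
    ∀ x ∈ Set.Icc (0:ℝ) 1, W x ≤ ∫ z in (0:ℝ)..x, (n : ℝ → ℝ) z := by
  obtain ⟨g, hg, hng⟩ := hnK
  have hnint : IntegrableOn (n : ℝ → ℝ) (Set.Ioo 0 1) volume :=
    (Lp.memLp n).integrable (by norm_num)
  have huint : IntegrableOn (u : ℝ → ℝ) (Set.Ioo 0 1) volume :=
    (Lp.memLp u).integrable (by norm_num)
  have hdint : IntegrableOn (fun z => (u : ℝ → ℝ) z - (n : ℝ → ℝ) z) (Set.Ioo 0 1) volume :=
    huint.sub hnint
  set Q : ℝ → ℝ := fun x => ∫ z in (0:ℝ)..x, (n : ℝ → ℝ) z with hQdef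
  set Fu : ℝ → ℝ := fun x => ∫ z in (0:ℝ)..x, (u : ℝ → ℝ) z with hFdef
  by_contra hcon
  push_neg at hcon
  obtain ⟨x₀, hx₀, hlt⟩ := hcon
  set DD : ℝ → ℝ := fun x => W x - Q x with hDDdef
  have hQcont : ContinuousOn Q (Set.Icc 0 1) := contOn_primitive _ hnint
  have hDcont : ContinuousOn DD (Set.Icc 0 1) := hWcont.sub hQcont
  have hQ0 : Q 0 = 0 := intervalIntegral.integral_same
  have hD0 : DD 0 ≤ 0 := by simp only [hDDdef, hQ0]; linarith
  have hD1 : DD 1 ≤ 0 := by simp only [hDDdef]; linarith [hW1]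
  have hDx₀ : 0 < DD x₀ := by simp only [hDDdef]; linarith
  -- the sets
  set S1 : Set ℝ := {x | x ∈ Set.Icc 0 x₀ ∧ DD x ≤ 0} with hS1def
  have hS1closed : IsClosed S1 := by
    have h1 : S1 = Set.Icc 0 x₀ ∩ DD ⁻¹' Set.Iic 0 := by
      ext z; simp [hS1def, Set.mem_sep_iff]
    rw [h1]
    exact (hDcont.mono (Set.Icc_subset_Icc le_rfl hx₀.2)).preimage_isClosed_of_isClosed
      isClosed_Icc isClosed_Iic
  have hS1ne : S1.Nonempty := ⟨0, ⟨le_rfl, hx₀.1⟩, hD0⟩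
  have hS1b : BddAbove S1 := bddAbove_Icc.mono (fun z hz => hz.1)
  set a : ℝ := sSup S1 with ha
  have haS1 : a ∈ S1 := hS1closed.csSup_mem hS1ne hS1b
  have ha0 : 0 ≤ a := haS1.1.1
  have hax₀ : a ≤ x₀ := haS1.1.2
  have hDa : DD a ≤ 0 := haS1.2
  have haltx₀ : a < x₀ := lt_of_le_of_ne hax₀ (fun h => by rw [h] at hDa; linarith)
  set S2 : Set ℝ := {x | x ∈ Set.Icc x₀ 1 ∧ DD x ≤ 0} with hS2def
  have hS2closed : IsClosed S2 := by
    have h1 : S2 = Set.Icc x₀ 1 ∩ DD ⁻¹' Set.Iic 0 := by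
      ext z; simp [hS2def, Set.mem_sep_iff]
    rw [h1]
    exact (hDcont.mono (Set.Icc_subset_Icc hx₀.1 le_rfl)).preimage_isClosed_of_isClosed
      isClosed_Icc isClosed_Iic
  have hS2ne : S2.Nonempty := ⟨1, ⟨hx₀.2, le_rfl⟩, hD1⟩
  have hS2b : BddBelow S2 := bddBelow_Icc.mono (fun z hz => hz.1)
  set b : ℝ := sInf S2 with hb
  have hbS2 : b ∈ S2 := hS2closed.csInf_mem hS2ne hS2b
  have hb1 : b ≤ 1 := hbS2.1.2
  have hx₀b : x₀ ≤ b := hbS2.1.1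
  have hDb : DD b ≤ 0 := hbS2.2
  have hx₀ltb : x₀ < b := lt_of_le_of_ne hx₀b (fun h => by rw [← h] at hDb; linarith)
  have hab : a < b := lt_trans haltx₀ hx₀ltb
  have hDpos : ∀ z, a < z → z < b → 0 < DD z := by
    intro z h1 h2
    rcases le_total z x₀ with hzx | hzx
    · by_contra hle
      push_neg at hle
      have : z ∈ S1 := ⟨⟨ha0.trans h1.le, hzx⟩, hle⟩
      exact absurd (le_csSup hS1b this) (not_le.mpr h1)
    · by_contra hle
      push_neg at hle
      have : z ∈ S2 := ⟨⟨hzx, h2.le.trans hb1⟩, hle⟩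
      exact absurd (csInf_le hS2b this) (not_le.mpr h2)
  -- H := Fu - Q dominates DD, and H r = 0 at level crossings forces g constant on (a,b)
  have hHeq : ∀ x, 0 ≤ x → x ≤ 1 →
      Fu x - Q x = ∫ z in (0:ℝ)..x, ((u : ℝ → ℝ) z - (n : ℝ → ℝ) z) := by
    intro x h0 h1
    rw [intervalIntegral.integral_sub (intervalIntegrable_of_Lp _ huint le_rfl h0 h1)
      (intervalIntegrable_of_Lp _ hnint le_rfl h0 h1)]
  have hpair : ∀ z1 z2, z1 ∈ Set.Ioo a b → z2 ∈ Set.Ioo a b → z1 ≤ z2 → g z1 = g z2 := by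
    intro z1 z2 hz1 hz2 hle
    have hz1' : z1 ∈ Set.Ioo (0:ℝ) 1 := ⟨ha0.trans_lt hz1.1, hz1.2.trans_le hb1⟩
    have hz2' : z2 ∈ Set.Ioo (0:ℝ) 1 := ⟨ha0.trans_lt hz2.1, hz2.2.trans_le hb1⟩
    by_contra hne
    have hglt : g z1 < g z2 := lt_of_le_of_ne (hg hz1' hz2' hle) hne
    obtain ⟨r, hr, htail⟩ := level_lemma u n hvi g hg hng hz1' hz2' hle hglt
    have hr01 : r ∈ Set.Icc (0:ℝ) 1 := ⟨hz1'.1.le.trans hr.1, hr.2.trans hz2'.2.le⟩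
    have hsplit : (∫ z in (0:ℝ)..r, ((u : ℝ → ℝ) z - (n : ℝ → ℝ) z))
        + ∫ z in r..1, ((u : ℝ → ℝ) z - (n : ℝ → ℝ) z)
        = ∫ z in (0:ℝ)..1, ((u : ℝ → ℝ) z - (n : ℝ → ℝ) z) :=
      intervalIntegral.integral_add_adjacent_intervals
        (intervalIntegrable_of_Lp _ hdint le_rfl hr01.1 hr01.2)
        (intervalIntegrable_of_Lp _ hdint hr01.1 hr01.2 le_rfl)
    have htotal := H_total_zero u n ⟨g, hg, hng⟩ hvi
    have hHr : Fu r - Q r = 0 := by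
      rw [hHeq r hr01.1 hr01.2]
      linarith [hsplit, htail, htotal]
    have hDDr : 0 < DD r := hDpos r (hz1.1.trans_le hr.1) (lt_of_le_of_lt hr.2 hz2.2)
    have hWr := hWF r hr01
    simp only [hDDdef] at hDDr
    have : W r ≤ Fu r := hWr
    linarith
  set c₀ : ℝ := g ((a + b) / 2) with hc₀
  have hmid : (a + b) / 2 ∈ Set.Ioo a b := ⟨by linarith, by linarith⟩
  have hgconst : ∀ z ∈ Set.Ioo a b, g z = c₀ := by
    intro z hz
    rcases le_total z ((a + b) / 2) with h | h
    · exact hpair z _ hz hmid h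
    · exact (hpair _ z hmid hz h).symm
  have hQseg : ∀ x y, a ≤ x → x ≤ y → y ≤ b → Q y - Q x = c₀ * (y - x) := by
    intro x y haxx hxy hyb
    have hx01 : 0 ≤ x := ha0.trans haxx
    have hy01 : y ≤ 1 := hyb.trans hb1
    have h1 : Q y - Q x = ∫ z in x..y, (n : ℝ → ℝ) z := by
      simp only [hQdef]
      rw [← intervalIntegral.integral_add_adjacent_intervals
        (intervalIntegrable_of_Lp _ hnint le_rfl hx01 (hxy.trans hy01))
        (intervalIntegrable_of_Lp _ hnint hx01 hxy hy01)]
      ring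
    have h2 : ∫ z in x..y, (n : ℝ → ℝ) z = ∫ z in x..y, g z :=
      integral_congr_ae01 hng hx01 hxy hy01
    have h3 : ∫ z in x..y, g z = c₀ * (y - x) := by
      rw [intervalIntegral.integral_of_le hxy, integral_Ioc_eq_integral_Ioo]
      have h4 : ∀ z ∈ Set.Ioo x y, g z = c₀ := fun z hz =>
        hgconst z ⟨haxx.trans_lt hz.1, hz.2.trans_le hyb⟩
      rw [setIntegral_congr_fun measurableSet_Ioo h4, setIntegral_const, smul_eq_mul,
        measureReal_def, Real.volume_Ioo, ENNReal.toReal_ofReal (by linarith : (0:ℝ) ≤ y - x)]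
      ring
    rw [h1, h2, h3]
  -- convexity contradiction
  set θ : ℝ := (b - x₀) / (b - a) with hθ
  have hba : (0:ℝ) < b - a := by linarith
  have hθ0 : 0 ≤ θ := div_nonneg (by linarith) hba.le
  have hθ1 : θ ≤ 1 := by
    rw [hθ, div_le_one hba]; linarith
  have hθba : θ * (b - a) = b - x₀ := by
    rw [hθ]; exact div_mul_cancel₀ _ hba.ne'
  have hpt : θ * a + (1 - θ) * b = x₀ := by nlinarith [hθba]
  have haI : a ∈ Set.Icc (0:ℝ) 1 := ⟨ha0, hax₀.trans hx₀.2⟩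
  have hbI : b ∈ Set.Icc (0:ℝ) 1 := ⟨hx₀.1.trans hx₀b, hb1⟩
  have hWx₀ : W x₀ ≤ θ * W a + (1 - θ) * W b := by
    have := hWconv.2 haI hbI hθ0 (sub_nonneg.mpr hθ1) (by ring : θ + (1 - θ) = 1)
    rw [smul_eq_mul, smul_eq_mul, smul_eq_mul, smul_eq_mul, hpt] at this
    exact this
  have e1 := hQseg a x₀ le_rfl haltx₀.le hx₀b
  have e2 := hQseg a b le_rfl hab.le le_rfl
  have hQx₀ : Q x₀ = θ * Q a + (1 - θ) * Q b := by
    linear_combination e1 - (1 - θ) * e2 + c₀ * hθba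
  have hfin1 : θ * DD a ≤ 0 := mul_nonpos_of_nonneg_of_nonpos hθ0 hDa
  have hfin2 : (1 - θ) * DD b ≤ 0 := mul_nonpos_of_nonneg_of_nonpos (by linarith) hDb
  simp only [hDDdef] at hDx₀ hfin1 hfin2
  nlinarith [hWx₀, hQx₀, hfin1, hfin2, hDx₀]

lemma convexOn_Q (n : Lp ℝ 2 μ01) (hnK : n ∈ K01) :
    ConvexOn ℝ (Set.Icc 0 1) (fun x => ∫ z in (0:ℝ)..x, (n : ℝ → ℝ) z) := by
  obtain ⟨g, hg, hng⟩ := hnK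
  have hgi : IntegrableOn g (Set.Ioo 0 1) volume :=
    ((Lp.memLp n).integrable (by norm_num)).congr hng
  have hconv := convexOn_primitive hg hgi
  refine ⟨convex_Icc _ _, fun x hx y hy α β hα hβ hαβ => ?_⟩
  have hmem := (convex_Icc (0:ℝ) 1) hx hy hα hβ hαβ
  have e : ∀ w ∈ Set.Icc (0:ℝ) 1,
      (∫ z in (0:ℝ)..w, (n : ℝ → ℝ) z) = ∫ z in (0:ℝ)..w, g z :=
    fun w hw => integral_congr_ae01 hng le_rfl hw.1 hw.2
  dsimp only
  rw [e _ hmem, e x hx, e y hy]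
  exact hconv.2 hx hy hα hβ hαβ

lemma Q_le_F (u n : Lp ℝ 2 μ01) (hnK : n ∈ K01)
    (hvi : ∀ k ∈ K01, (inner ℝ (u - n) (k - n) : ℝ) ≤ 0) :
    (∀ x ∈ Set.Icc (0:ℝ) 1,
      (∫ z in (0:ℝ)..x, (n : ℝ → ℝ) z) ≤ ∫ z in (0:ℝ)..x, (u : ℝ → ℝ) z) ∧
    (∫ z in (0:ℝ)..1, (n : ℝ → ℝ) z) = ∫ z in (0:ℝ)..1, (u : ℝ → ℝ) z := by
  have hdint : IntegrableOn (fun z => (u : ℝ → ℝ) z - (n : ℝ → ℝ) z) (Set.Ioo 0 1) volume :=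
    ((Lp.memLp u).integrable (by norm_num) : Integrable (u : ℝ → ℝ) μ01).sub
      ((Lp.memLp n).integrable (by norm_num))
  have huint : IntegrableOn (u : ℝ → ℝ) (Set.Ioo 0 1) volume :=
    (Lp.memLp u).integrable (by norm_num)
  have hnint : IntegrableOn (n : ℝ → ℝ) (Set.Ioo 0 1) volume :=
    (Lp.memLp n).integrable (by norm_num)
  have htot := H_total_zero u n hnK hvi
  have hsub : ∀ x, 0 ≤ x → x ≤ 1 →
      (∫ z in (0:ℝ)..x, ((u : ℝ → ℝ) z - (n : ℝ → ℝ) z))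
      = (∫ z in (0:ℝ)..x, (u : ℝ → ℝ) z) - ∫ z in (0:ℝ)..x, (n : ℝ → ℝ) z := by
    intro x h0 h1
    rw [intervalIntegral.integral_sub (intervalIntegrable_of_Lp _ huint le_rfl h0 h1)
      (intervalIntegrable_of_Lp _ hnint le_rfl h0 h1)]
  constructor
  · intro x hx
    have hsplit : (∫ z in (0:ℝ)..x, ((u : ℝ → ℝ) z - (n : ℝ → ℝ) z))
        + ∫ z in x..1, ((u : ℝ → ℝ) z - (n : ℝ → ℝ) z)
        = ∫ z in (0:ℝ)..1, ((u : ℝ → ℝ) z - (n : ℝ → ℝ) z) :=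
      intervalIntegral.integral_add_adjacent_intervals
        (intervalIntegrable_of_Lp _ hdint le_rfl hx.1 hx.2)
        (intervalIntegrable_of_Lp _ hdint hx.1 hx.2 le_rfl)
    have htail := H_tail_nonpos u n hnK hvi x hx
    have := hsub x hx.1 hx.2
    linarith
  · have := hsub 1 zero_le_one le_rfl
    linarith

end Helpers

/-- **Proposition 3.13.** Let `N0 ∈ K`, `V0 ∈ L^∞(0,1)`,
`N t := proj_K (N0 + t • V0)`, and `P t x := ∫₀ˣ N(t,z) dz`.  Then `t ↦ P t x` is
concave on `[0,∞)` for each `x ∈ [0,1]`, and `x ↦ P t x` is convex on `[0,1]` for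
each `t ≥ 0`. -/
theorem primitive_concave_in_time_convex_in_space
    (proj : Lp ℝ 2 μ01 → Lp ℝ 2 μ01)
    (hprojmem : ∀ u, proj u ∈ K01)
    (hprojnear : ∀ u, ∀ k ∈ K01, ‖u - proj u‖ ≤ ‖u - k‖)
    (N0 V0 : Lp ℝ 2 μ01) (hN0K : N0 ∈ K01)
    (hV0bdd : ∃ C : ℝ, ∀ᵐ x ∂μ01, |(V0 : ℝ → ℝ) x| ≤ C)
    (N : ℝ → Lp ℝ 2 μ01)
    (hN : ∀ t : ℝ, 0 ≤ t → N t = proj (N0 + t • V0))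
    (P : ℝ → ℝ → ℝ)
    (hP : ∀ t : ℝ, 0 ≤ t → ∀ x ∈ Set.Icc (0:ℝ) 1,
      P t x = ∫ z in (0:ℝ)..x, (N t : ℝ → ℝ) z) :
    (∀ x ∈ Set.Icc (0:ℝ) 1, ConcaveOn ℝ (Set.Ici 0) (fun t => P t x)) ∧
      (∀ t : ℝ, 0 ≤ t → ConvexOn ℝ (Set.Icc 0 1) (fun x => P t x)) := by
  -- basic data for each nonnegative time
  have hNK : ∀ t : ℝ, 0 ≤ t → N t ∈ K01 := fun t ht => (hN t ht) ▸ hprojmem _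
  have hvi : ∀ t : ℝ, 0 ≤ t → ∀ k ∈ K01,
      (inner ℝ ((N0 + t • V0) - N t) (k - N t) : ℝ) ≤ 0 := by
    intro t ht k hk
    rw [hN t ht]
    exact proj_vi proj hprojmem hprojnear _ k hk
  -- the convexity part
  have hconvex : ∀ t : ℝ, 0 ≤ t → ConvexOn ℝ (Set.Icc 0 1) (fun x => P t x) := by
    intro t ht
    have hQ := convexOn_Q (N t) (hNK t ht)
    refine ⟨convex_Icc _ _, fun x hx y hy α β hα hβ hαβ => ?_⟩
    have hmem := (convex_Icc (0:ℝ) 1) hx hy hα hβ hαβ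
    dsimp only
    rw [hP t ht _ hmem, hP t ht x hx, hP t ht y hy]
    exact hQ.2 hx hy hα hβ hαβ
  refine ⟨?_, hconvex⟩
  -- the concavity part
  intro x hx
  refine ⟨convex_Ici 0, fun t ht s hs α β hα hβ hαβ => ?_⟩
  simp only [smul_eq_mul]
  have ht' : (0:ℝ) ≤ t := ht
  have hs' : (0:ℝ) ≤ s := hs
  set m : ℝ := α * t + β * s with hm
  have hm0 : 0 ≤ m := add_nonneg (mul_nonneg hα ht') (mul_nonneg hβ hs')
  -- notation
  set ut : Lp ℝ 2 μ01 := N0 + t • V0 with hut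
  set us : Lp ℝ 2 μ01 := N0 + s • V0 with hus
  set um : Lp ℝ 2 μ01 := N0 + m • V0 with hum
  have hsum : um = α • ut + β • us := by
    have hN0' : N0 = α • N0 + β • N0 := by rw [← add_smul, hαβ, one_smul]
    calc um = (α • N0 + β • N0) + ((α * t) • V0 + (β * s) • V0) := by
          rw [hum, ← hN0', hm, add_smul]
      _ = α • ut + β • us := by
          rw [hut, hus, smul_add, smul_add, smul_smul, smul_smul]; abel
  -- coeFn linearity
  have hcoe : (um : ℝ → ℝ) =ᵐ[μ01]
      fun z => α * (ut : ℝ → ℝ) z + β * (us : ℝ → ℝ) z := by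
    rw [hsum]
    filter_upwards [Lp.coeFn_add (α • ut) (β • us), Lp.coeFn_smul α ut, Lp.coeFn_smul β us]
      with z h1 h2 h3
    rw [h1, Pi.add_apply, h2, h3, Pi.smul_apply, Pi.smul_apply, smul_eq_mul, smul_eq_mul]
  -- F-values combine linearly
  have hFlin : ∀ y : ℝ, 0 ≤ y → y ≤ 1 →
      (∫ z in (0:ℝ)..y, (um : ℝ → ℝ) z)
        = α * (∫ z in (0:ℝ)..y, (ut : ℝ → ℝ) z) + β * ∫ z in (0:ℝ)..y, (us : ℝ → ℝ) z := by
    intro y h0 h1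
    rw [integral_congr_ae01 hcoe le_rfl h0 h1]
    rw [intervalIntegral.integral_add
      ((intervalIntegrable_of_Lp _ (Lp_integrableOn ut) le_rfl h0 h1).const_mul α)
      ((intervalIntegrable_of_Lp _ (Lp_integrableOn us) le_rfl h0 h1).const_mul β),
      intervalIntegral.integral_const_mul, intervalIntegral.integral_const_mul]
  -- the convex comparison function W
  set W : ℝ → ℝ := fun y => α * (∫ z in (0:ℝ)..y, (N t : ℝ → ℝ) z)
      + β * ∫ z in (0:ℝ)..y, (N s : ℝ → ℝ) z with hW
  have hWconv : ConvexOn ℝ (Set.Icc 0 1) W := by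
    have h1 := (convexOn_Q (N t) (hNK t ht')).smul hα
    have h2 := (convexOn_Q (N s) (hNK s hs')).smul hβ
    have := h1.add h2
    refine ⟨this.1, fun p hp q hq γ δ hγ hδ hγδ => ?_⟩
    have h3 := this.2 hp hq hγ hδ hγδ
    simpa [Pi.add_apply, Pi.smul_apply, smul_eq_mul, hW] using h3
  have hWcont : ContinuousOn W (Set.Icc 0 1) := by
    refine (continuousOn_const.mul (contOn_primitive _ (Lp_integrableOn (N t)))).add
      (continuousOn_const.mul (contOn_primitive _ (Lp_integrableOn (N s))))
  have hW0 : W 0 ≤ 0 := by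
    simp [hW, intervalIntegral.integral_same]
  have hQF_t := Q_le_F ut (N t) (hNK t ht') (hvi t ht')
  have hQF_s := Q_le_F us (N s) (hNK s hs') (hvi s hs')
  have hQF_m := Q_le_F um (N m) (hNK m hm0) (hvi m hm0)
  have hWF : ∀ y ∈ Set.Icc (0:ℝ) 1, W y ≤ ∫ z in (0:ℝ)..y, (um : ℝ → ℝ) z := by
    intro y hy
    rw [hFlin y hy.1 hy.2]
    have h1 := hQF_t.1 y hy
    have h2 := hQF_s.1 y hy
    have h3 := mul_le_mul_of_nonneg_left h1 hα
    have h4 := mul_le_mul_of_nonneg_left h2 hβ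
    simp only [hW]
    linarith
  have hW1 : W 1 ≤ ∫ z in (0:ℝ)..1, (N m : ℝ → ℝ) z := by
    have h1 := hQF_t.2
    have h2 := hQF_s.2
    have h3 := hQF_m.2
    have h4 := hFlin 1 zero_le_one le_rfl
    have e1 : α * (∫ z in (0:ℝ)..1, (N t : ℝ → ℝ) z)
        = α * ∫ z in (0:ℝ)..1, (ut : ℝ → ℝ) z := by rw [h1]
    have e2 : β * (∫ z in (0:ℝ)..1, (N s : ℝ → ℝ) z)
        = β * ∫ z in (0:ℝ)..1, (us : ℝ → ℝ) z := by rw [h2]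
    simp only [hW]
    linarith [e1, e2, h3, h4]
  have hfinal := below_primitive um (N m) (hNK m hm0) (hvi m hm0) W hWconv hWcont hW0 hWF hW1
    x hx
  rw [hP t ht' x hx, hP s hs' x hx, hP m hm0 x hx]
  simpa only [hW] using hfinal
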